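/- arXiv:1807.07755 — 4 statements merged into one kernel-verified Lean document; each statement's English description precedes it below -/
import Mathlib

section
/- Let σ be an involutive automorphism of a profinite group U which is a pro-p group for an odd prime p. Then the first nonabelian cohomology set H¹(⟨σ⟩, U) is trivial: every element u ∈ U with u·σ(u) = 1 can be written u = v·σ(v)⁻¹ for some v ∈ U. -/
/-!
Fix an open normal subgroup `N`. The index of `N` is a power of `p`, hence odd, say `2k + 1`, so
`x = u ^ (k + 1)` satisfies `x² ≡ u` modulo `N`. By compactness there is a single `x` in the closure
of `⟨u⟩` with `x² = u`. Since `σ u = u⁻¹`, the continuous map `σ` inverts that closure, so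
`σ x = x⁻¹` and `u = x · x = x · (σ x)⁻¹`.
-/

theorem Subgroup.exists_mem_zpowers_sq_mul_inv_mem_of_odd_index {G : Type*} [Group G]
    (N : Subgroup G) [N.Normal] (hN : Odd N.index) (g : G) :
    ∃ x ∈ Subgroup.zpowers g, x ^ 2 * g⁻¹ ∈ N := by
  obtain ⟨k, hk⟩ := hN
  refine ⟨g ^ (k + 1), Subgroup.npow_mem_zpowers g _, ?_⟩
  have hsq : (g ^ (k + 1)) ^ 2 * g⁻¹ = g ^ N.index := by
    rw [← pow_mul, hk, show (k + 1) * 2 = 2 * k + 1 + 1 by ring, pow_succ, mul_inv_cancel_right]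
  exact hsq ▸ N.pow_index_mem g

theorem map_eq_inv_of_mem_closure_zpowers {G : Type*} [Group G] [TopologicalSpace G]
    [ContinuousInv G] [T2Space G] {σ : G →* G} (hσ : Continuous σ) {u : G} (hu : σ u = u⁻¹)
    {x : G} (hx : x ∈ closure (Subgroup.zpowers u : Set G)) : σ x = x⁻¹ := by
  refine closure_minimal (s := (Subgroup.zpowers u : Set G)) ?_
    (isClosed_eq hσ continuous_inv) hx
  rintro _ ⟨n, rfl⟩
  exact (map_zpow σ u n).trans (by rw [hu, inv_zpow])

section Profinite

variable {G : Type*} [Group G] [TopologicalSpace G] [IsTopologicalGroup G] [CompactSpace G]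
  [TotallyDisconnectedSpace G]

theorem eq_one_of_forall_mem_openNormalSubgroup {g : G}
    (hg : ∀ N : OpenNormalSubgroup G, g ∈ N) : g = 1 := by
  by_contra hne
  obtain ⟨N, hN⟩ := ProfiniteGrp.exist_openNormalSubgroup_sub_open_nhds_of_one
    isOpen_compl_singleton (Set.mem_compl_singleton_iff.mpr (Ne.symm hne))
  exact hN (hg N) rfl

theorem exists_eq_one_of_forall_exists_mem_openNormalSubgroup {X : Type*} [TopologicalSpace X]
    [CompactSpace X] {K : Set X} (hK : IsClosed K) {f : X → G} (hf : Continuous f)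
    (h : ∀ N : OpenNormalSubgroup G, ∃ x ∈ K, f x ∈ N) : ∃ x ∈ K, f x = 1 := by
  let t : OpenNormalSubgroup G → Set X := fun N => K ∩ f ⁻¹' N
  have ht_closed : ∀ N, IsClosed (t N) := fun N =>
    hK.inter (N.toOpenSubgroup.isClosed.preimage hf)
  have ht_directed : Directed (· ⊇ ·) t := fun N M =>
    ⟨N ⊓ M, fun _ hx => ⟨hx.1, hx.2.1⟩, fun _ hx => ⟨hx.1, hx.2.2⟩⟩
  have : Nonempty (OpenNormalSubgroup G) := ⟨⟨⟨⊤, isOpen_univ⟩, inferInstance⟩⟩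
  obtain ⟨x, hx⟩ := IsCompact.nonempty_iInter_of_directed_nonempty_isCompact_isClosed t
    ht_directed h (fun N => (ht_closed N).isCompact) ht_closed
  rw [Set.mem_iInter] at hx
  exact ⟨x, (hx (Classical.arbitrary _)).1,
    eq_one_of_forall_mem_openNormalSubgroup fun N => (hx N).2⟩

end Profinite

theorem stmt_1_general (p : ℕ) (hodd : Odd p)
    (U : Type*) [Group U] [TopologicalSpace U] [IsTopologicalGroup U]
    [CompactSpace U] [TotallyDisconnectedSpace U] [T2Space U]
    (hpro : ∀ H : Subgroup U, H.Normal → IsOpen (H : Set U) →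
      ∃ m : ℕ, Nat.card (U ⧸ H) = p ^ m)
    (σ : U →* U) (hσc : Continuous σ)
    (u : U) (hu : u * σ u = 1) :
    ∃ v : U, u = v * (σ v)⁻¹ := by
  have hsqrt_mod : ∀ N : OpenNormalSubgroup U,
      ∃ x ∈ closure (Subgroup.zpowers u : Set U), x ^ 2 * u⁻¹ ∈ N := fun N => by
    obtain ⟨m, hm⟩ := hpro N N.isNormal' N.isOpen
    have hN : Odd (N : Subgroup U).index := by
      rw [Subgroup.index_eq_card, hm]
      exact hodd.pow
    obtain ⟨y, hy, hyN⟩ := (N : Subgroup U).exists_mem_zpowers_sq_mul_inv_mem_of_odd_index hN u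
    exact ⟨y, subset_closure hy, hyN⟩
  obtain ⟨x, hx, hx2⟩ :=
    exists_eq_one_of_forall_exists_mem_openNormalSubgroup isClosed_closure (by fun_prop) hsqrt_mod
  have hσx := map_eq_inv_of_mem_closure_zpowers hσc (eq_inv_of_mul_eq_one_right hu) hx
  refine ⟨x, ?_⟩
  rw [hσx, inv_inv, ← sq]
  exact (mul_inv_eq_one.mp hx2).symm

/-- For an involutive continuous automorphism σ of a pro-p group U with p odd,
the first cohomology set H¹(⟨σ⟩, U) is trivial: every u with u·σ(u) = 1 is of the form
v·σ(v)⁻¹. -/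
theorem stmt_1 (p : ℕ) (hp : Nat.Prime p) (hodd : Odd p)
    (U : Type*) [Group U] [TopologicalSpace U] [IsTopologicalGroup U]
    [CompactSpace U] [TotallyDisconnectedSpace U] [T2Space U]
    (hpro : ∀ H : Subgroup U, H.Normal → IsOpen (H : Set U) →
      ∃ m : ℕ, Nat.card (U ⧸ H) = p ^ m)
    (σ : U →* U) (hσc : Continuous σ) (hσ2 : ∀ u, σ (σ u) = u)
    (u : U) (hu : u * σ u = 1) :
    ∃ v : U, u = v * (σ v)⁻¹ :=
  stmt_1_general p hodd U hpro σ hσc u hu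
end

section
/- With F/F₀ quadratic with involution σ, T/F of degree t, and α an involution of T extending σ with fixed field T₀ satisfying T₀ ⊗_{F₀} F ≅ T, there exists an embedding of F-algebras ι : T → M_t(F) such that ι(α(x)) = σ(ι(x)) for all x ∈ T, where σ acts entrywise on M_t(F). In particular the image of ι is σ-stable. -/
/-!
The isomorphism `F ⊗[F₀] T₀ ≃ T` turns any `F₀`-basis of `T₀` into an `F`-basis of `T` made of
`α`-fixed vectors. Since `α` is `σ`-semilinear, in such a basis it acts on coordinates by `σ`, so
the regular representation `x ↦ (matrix of multiplication by x)` intertwines `α` with entrywise `σ`.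
-/

open scoped TensorProduct

namespace Module.Basis

variable {ι R M : Type*} [CommSemiring R] [AddCommMonoid M] [Module R M]

theorem repr_apply_of_map_smul (b : Basis ι R M) (σ : R →+* R) (f : M →+ M)
    (hf : ∀ (c : R) (y : M), f (c • y) = σ c • f y) (hb : ∀ i, f (b i) = b i) (y : M) (i : ι) :
    b.repr (f y) i = σ (b.repr y i) := by
  have hy : y ∈ Submodule.span R (Set.range b) := b.span_eq ▸ Submodule.mem_top
  induction hy using Submodule.span_induction with
  | mem y hy =>
    obtain ⟨j, rfl⟩ := hy
    classical
    rw [hb, repr_self, Finsupp.single_apply]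
    split_ifs <;> simp
  | zero => simp
  | add y z _ _ hy hz => simp [hy, hz]
  | smul c y _ hy => simp [hf, hy]

end Module.Basis

namespace Algebra

variable {ι R S : Type*} [Fintype ι] [DecidableEq ι] [CommRing R] [Ring S] [Algebra R S]

theorem leftMulMatrix_map_of_map_algebraMap (b : Module.Basis ι R S) (σ : R →+* R)
    (α : S →+* S) (hα : ∀ c, α (algebraMap R S c) = algebraMap R S (σ c))
    (hb : ∀ i, α (b i) = b i) (x : S) :
    leftMulMatrix b (α x) = (leftMulMatrix b x).map σ := by
  ext i j
  rw [Matrix.map_apply, leftMulMatrix_eq_repr_mul, leftMulMatrix_eq_repr_mul]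
  conv_lhs => rw [← hb j, ← map_mul]
  refine b.repr_apply_of_map_smul σ α (fun c y => ?_) hb _ _
  simp only [AddMonoidHom.coe_coe, Algebra.smul_def, map_mul, hα]

end Algebra

section BaseChange

open Algebra.TensorProduct

variable {R S A : Type*} [CommRing R] [CommRing S] [CommRing A] [Algebra R S] [Algebra R A]
  [Algebra S A] [IsScalarTower R S A] {A₀ : Subalgebra R A}
  (h : Function.Bijective (productMap A₀.val (IsScalarTower.toAlgHom R S A)))

noncomputable def Subalgebra.baseChangeEquivOfBijective : S ⊗[R] A₀ ≃ₐ[S] A :=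
  AlgEquiv.ofBijective (productLeftAlgHom (Algebra.ofId S A) A₀.val) <| by
    convert h.comp (TensorProduct.comm R S A₀).bijective
    ext z
    induction z using TensorProduct.induction_on with
    | zero => simp
    | tmul s a => simp [mul_comm]
    | add y z hy hz => simp_all

noncomputable def Module.Basis.ofBijectiveProductMap {ι : Type*} (b : Module.Basis ι R A₀) :
    Module.Basis ι S A :=
  (b.baseChange S).map (Subalgebra.baseChangeEquivOfBijective h).toLinearEquiv

@[simp]
theorem Module.Basis.ofBijectiveProductMap_apply {ι : Type*} (b : Module.Basis ι R A₀) (i : ι) :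
    b.ofBijectiveProductMap h i = b i := by
  simp [Module.Basis.ofBijectiveProductMap, Subalgebra.baseChangeEquivOfBijective]

end BaseChange

theorem stmt_3_general (F₀ F T : Type*) [Field F₀] [Field F] [Field T]
    [Algebra F₀ F] [Algebra F₀ T] [Algebra F T] [IsScalarTower F₀ F T]
    [FiniteDimensional F T]
    (σ : F ≃ₐ[F₀] F)
    (α : T ≃ₐ[F₀] T)
    (hext : ∀ x : F, α (algebraMap F T x) = algebraMap F T (σ x))
    (T₀ : Subalgebra F₀ T) (hT₀ : ∀ x : T, x ∈ T₀ ↔ α x = x)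
    (hiso : Function.Bijective
      ⇑(Algebra.TensorProduct.productMap T₀.val (IsScalarTower.toAlgHom F₀ F T)))
    (t : ℕ) (ht : Module.finrank F T = t) :
    ∃ ι : T →ₐ[F] Matrix (Fin t) (Fin t) F,
      Function.Injective ι ∧ ∀ x : T, ι (α x) = (ι x).map ⇑σ := by
  let b := (Module.Basis.ofVectorSpace F₀ T₀).ofBijectiveProductMap hiso
  let b' := b.reindex (b.indexEquiv (Module.finBasisOfFinrankEq F T ht))
  have hb'_fixed : ∀ i, α (b' i) = b' i := fun i => (hT₀ _).1 (by simp [b', b])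
  exact ⟨Algebra.leftMulMatrix b', Algebra.leftMulMatrix_injective b',
    Algebra.leftMulMatrix_map_of_map_algebraMap b' σ α hext hb'_fixed⟩

/-- Given the isomorphism T₀ ⊗_{F₀} F ≅ T, there is an embedding of F-algebras
ι : T → M_t(F) with ι(α(x)) = σ(ι(x)) (entrywise σ); in particular the image of ι is
σ-stable. -/
theorem stmt_3 (F₀ F T : Type*) [Field F₀] [Field F] [Field T]
    [Algebra F₀ F] [Algebra F₀ T] [Algebra F T] [IsScalarTower F₀ F T]
    [FiniteDimensional F T]
    (hquad : Module.finrank F₀ F = 2)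
    (σ : F ≃ₐ[F₀] F) (hσ : ∃ x, σ x ≠ x)
    (α : T ≃ₐ[F₀] T) (hα2 : ∀ x, α (α x) = x)
    (hext : ∀ x : F, α (algebraMap F T x) = algebraMap F T (σ x))
    (T₀ : Subalgebra F₀ T) (hT₀ : ∀ x : T, x ∈ T₀ ↔ α x = x)
    (hiso : Function.Bijective
      ⇑(Algebra.TensorProduct.productMap T₀.val (IsScalarTower.toAlgHom F₀ F T)))
    (t : ℕ) (ht : Module.finrank F T = t) :
    ∃ ι : T →ₐ[F] Matrix (Fin t) (Fin t) F,
      Function.Injective ι ∧ ∀ x : T, ι (α x) = (ι x).map ⇑σ :=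
  stmt_3_general F₀ F T σ α hext T₀ hT₀ hiso t ht
end

section
/- Let G be a locally profinite group, σ a continuous involution of G, K a σ-stable open subgroup, N a σ-stable subgroup that is an increasing union of σ-stable pro-p subgroups for an odd prime p, and g ∈ G. (i) If the double coset NgK is σ-stable then it contains a σ-stable left K-coset. (ii) If gK is σ-stable, then every σ-stable left K-coset contained in NgK lies in N^σ·g·K, where N^σ is the σ-fixed subgroup of N. (iii) (NK)^σ = N^σ·K^σ. -/
/-!
σ induces an involution of `G ⧸ K` that is compatible with left translations twisted by σ.

(i) If `σ g ∈ n g K` with `n` in a σ-stable pro-`p` subgroup `N₀ ≤ N`, the `N₀`-orbit of `gK` is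
σ-stable, and it has odd cardinality `[N₀ : N₀ ∩ gKg⁻¹]`; an involution of a set of odd size has a
fixed point.

(ii) If `gK` and `ngK` are σ-stable, then `u = n⁻¹ σ(n)` stabilises `gK` and `σ u = u⁻¹`. As every
open normal subgroup of `N₀` has odd index, `u` lies in the closure of `⟨u²⟩`, so by compactness
`u = a²` for some `a` in the closure of `⟨u⟩`, on which σ acts by inversion; hence
`σ (n a) = n u a⁻¹ = n a` and `n a g K = n g K`. This is the vanishing of `H¹(⟨σ⟩, -)`.

(iii) is (ii) for `g = 1`.
-/

open Pointwise

/-- A (topological) group is pro-p if it is profinite and every open normal subgroup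
has index a power of p. -/
def IsProP (p : ℕ) (U : Type*) [Group U] [TopologicalSpace U] : Prop :=
  CompactSpace U ∧ TotallyDisconnectedSpace U ∧ T2Space U ∧ IsTopologicalGroup U ∧
    ∀ H : Subgroup U, H.Normal → IsOpen (H : Set U) →
      ∃ m : ℕ, Nat.card (U ⧸ H) = p ^ m

theorem Function.Involutive.exists_fixed_of_odd_card {α : Type*} [Finite α] {f : α → α}
    (hf : Function.Involutive f) (hα : Odd (Nat.card α)) : ∃ a, f a = a := by
  have := Fintype.ofFinite α
  have : Fact (Nat.Prime 2) := ⟨Nat.prime_two⟩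
  refine Equiv.Perm.exists_fixed_point_of_prime (p := 2) (n := 1) ?_ (σ := hf.toPerm f) ?_
  · rw [← Nat.card_eq_fintype_card]
    exact hα.not_two_dvd_nat
  · ext a
    simp [sq, hf a]

theorem MulAction.exists_fixed_mem_orbit_of_odd_index {H X : Type*} [Group H] [MulAction H X]
    {τ : H → H} {s : X → X} (hs : Function.Involutive s)
    (hsmul : ∀ (h : H) x, s (h • x) = τ h • s x) {x : X} (hx : s x ∈ orbit H x)
    (hodd : Odd (stabilizer H x).index) : ∃ y ∈ orbit H x, s y = y := by
  rw [index_stabilizer] at hodd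
  have : Finite (orbit H x) := Set.finite_of_ncard_ne_zero hodd.pos.ne'
  have hmaps : Set.MapsTo s (orbit H x) (orbit H x) := by
    rintro _ ⟨h, rfl⟩
    obtain ⟨h', hh'⟩ := hx
    exact ⟨τ h * h', by simp only [hsmul, ← hh', mul_smul]⟩
  obtain ⟨⟨y, hy⟩, hfix⟩ := Function.Involutive.exists_fixed_of_odd_card (f := hmaps.restrict)
    (fun y => Subtype.ext (hs y)) (by rwa [Nat.card_coe_set_eq])
  exact ⟨y, hy, congrArg Subtype.val hfix⟩

theorem IsProP.odd_index {p : ℕ} (hp : Odd p) {P : Type*} [Group P] [TopologicalSpace P]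
    (hP : IsProP p P) {V : Subgroup P} (hV : IsOpen (V : Set P)) : Odd V.index := by
  obtain ⟨_, _, _, _, hind⟩ := hP
  obtain ⟨W, hWV⟩ := ProfiniteGrp.exist_openNormalSubgroup_sub_open_nhds_of_one hV V.one_mem
  obtain ⟨m, hm⟩ := hind W W.isNormal' W.isOpen
  have hW : (W : Subgroup P).index = p ^ m := hm
  exact hp.pow.of_dvd_nat (hW ▸ Subgroup.index_dvd_of_le hWV)

section CompactGroup

variable {P : Type*} [Group P] [TopologicalSpace P] [IsTopologicalGroup P] [CompactSpace P]

theorem mem_closure_zpowers_sq [TotallyDisconnectedSpace P]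
    (hP : ∀ V : Subgroup P, IsOpen (V : Set P) → Odd V.index) (u : P) :
    u ∈ closure (Subgroup.zpowers (u ^ 2) : Set P) := by
  refine mem_closure_iff.mpr fun O hO huO => ?_
  obtain ⟨W, hWO⟩ := ProfiniteGrp.exist_openNormalSubgroup_sub_open_nhds_of_one
    (hO.preimage (continuous_const_mul u)) (by simpa using huO)
  obtain ⟨s, hs⟩ := hP W W.isOpen
  have hsq : (u ^ 2) ^ (s + 1) = u * u ^ W.index := by
    rw [← pow_mul, ← pow_succ', hs]
    ring_nf
  refine ⟨(u ^ 2) ^ (s + 1), ?_, Subgroup.npow_mem_zpowers _ _⟩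
  rw [hsq]
  exact hWO (W.pow_index_mem u)

variable [T2Space P]

theorem exists_sq_eq_of_mem_closure_zpowers_sq {u : P}
    (hu : u ∈ closure (Subgroup.zpowers (u ^ 2) : Set P)) :
    ∃ a ∈ closure (Subgroup.zpowers u : Set P), a ^ 2 = u := by
  have hclosed : IsClosed ((· ^ 2) '' closure (Subgroup.zpowers u : Set P)) :=
    (isClosed_closure.isCompact.image (continuous_pow 2)).isClosed
  refine closure_minimal ?_ hclosed hu
  rintro _ ⟨n, rfl⟩
  exact ⟨u ^ n, subset_closure (Subgroup.zpow_mem_zpowers u n),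
    by simp only [← zpow_natCast, ← zpow_mul, mul_comm]⟩

theorem exists_mem_closure_zpowers_map_eq_inv_mul {τ : P →* P} (hτ : Continuous τ) {u : P}
    (hu : τ u = u⁻¹) (hsq : u ∈ closure (Subgroup.zpowers (u ^ 2) : Set P)) :
    ∃ w ∈ closure (Subgroup.zpowers u : Set P), τ w = u⁻¹ * w := by
  obtain ⟨a, ha, rfl⟩ := exists_sq_eq_of_mem_closure_zpowers_sq hsq
  have hτ_inv : Set.EqOn τ (·⁻¹) (closure (Subgroup.zpowers (a ^ 2) : Set P)) := by
    refine Set.EqOn.closure ?_ hτ continuous_inv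
    rintro _ ⟨n, rfl⟩
    simp [hu]
  refine ⟨a, ha, ?_⟩
  rw [hτ_inv ha]
  group

end CompactGroup

theorem IsProP.exists_mem_closure_zpowers_map_eq_inv_mul {p : ℕ} (hp : Odd p) {P : Type*}
    [Group P] [TopologicalSpace P] (hP : IsProP p P) {τ : P →* P} (hτ : Continuous τ) {u : P}
    (hu : τ u = u⁻¹) : ∃ w ∈ closure (Subgroup.zpowers u : Set P), τ w = u⁻¹ * w := by
  obtain ⟨_, _, _, _, -⟩ := id hP
  exact _root_.exists_mem_closure_zpowers_map_eq_inv_mul hτ hu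
    (mem_closure_zpowers_sq (fun _ hV => hP.odd_index hp hV) u)

section CosetMap

variable {G : Type*} [Group G] (σ : G →* G) {K : Subgroup G} (hKσ : ∀ x ∈ K, σ x ∈ K)

def cosetMap : G ⧸ K → G ⧸ K :=
  Quotient.map' σ fun a b hab => by
    rw [QuotientGroup.leftRel_apply] at hab ⊢
    simpa using hKσ _ hab

@[simp]
theorem cosetMap_mk (a : G) : cosetMap σ hKσ a = (σ a : G ⧸ K) := rfl

theorem cosetMap_smul (a : G) (q : G ⧸ K) :
    cosetMap σ hKσ (a • q) = σ a • cosetMap σ hKσ q := by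
  induction q using QuotientGroup.induction_on
  simp [MulAction.Quotient.smul_mk]

theorem cosetMap_involutive (hσ2 : ∀ g, σ (σ g) = g) :
    Function.Involutive (cosetMap σ hKσ) := by
  intro q
  induction q using QuotientGroup.induction_on
  simp [hσ2]

theorem image_singleton_mul_eq_iff (hσ2 : ∀ g, σ (σ g) = g) (h : G) :
    σ '' ({h} * K) = {h} * K ↔ cosetMap σ hKσ h = h := by
  have hK : σ '' K = K :=
    (Set.image_subset_iff.mpr hKσ).antisymm fun x hx => ⟨σ x, hKσ x hx, hσ2 x⟩
  rw [Set.image_mul, Set.image_singleton, hK, Set.singleton_mul, Set.singleton_mul]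
  change σ h • (K : Set G) = h • (K : Set G) ↔ _
  rw [leftCoset_eq_iff, cosetMap_mk, QuotientGroup.eq]

theorem mem_mul_singleton_mul_iff {A : Set G} {g x : G} :
    x ∈ A * {g} * K ↔ ∃ a ∈ A, a • (g : G ⧸ K) = x := by
  simp only [Set.mul_singleton, Set.mem_mul, Set.mem_image, MulAction.Quotient.smul_mk,
    smul_eq_mul, QuotientGroup.eq]
  constructor
  · rintro ⟨_, ⟨a, ha, rfl⟩, k, hk, rfl⟩
    exact ⟨a, ha, by simpa [mul_assoc] using hk⟩
  · rintro ⟨a, ha, hax⟩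
    exact ⟨a * g, ⟨a, ha, rfl⟩, _, hax, mul_inv_cancel_left _ _⟩

end CosetMap

section ProPSubgroup

variable {G : Type*} [Group G] [TopologicalSpace G] [IsTopologicalGroup G] {σ : G →* G}
  {K : Subgroup G} {p : ℕ} {N₀ : Subgroup G}

theorem isOpen_stabilizer_quotient (hK : IsOpen (K : Set G)) (H : Subgroup G) (q : G ⧸ K) :
    IsOpen (MulAction.stabilizer H q : Set H) := by
  have := QuotientGroup.discreteTopology hK
  exact (isOpen_discrete {q}).preimage (continuous_subtype_val.smul continuous_const)

theorem exists_cosetMap_fixed_mem_orbit (hσ2 : ∀ g, σ (σ g) = g) (hKσ : ∀ x ∈ K, σ x ∈ K)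
    (hKo : IsOpen (K : Set G)) (hp : Odd p) (hN₀σ : ∀ x ∈ N₀, σ x ∈ N₀) (hN₀ : IsProP p N₀)
    {q : G ⧸ K} (hq : cosetMap σ hKσ q ∈ MulAction.orbit N₀ q) :
    ∃ y ∈ MulAction.orbit N₀ q, cosetMap σ hKσ y = y :=
  MulAction.exists_fixed_mem_orbit_of_odd_index (H := N₀) (τ := fun n => ⟨σ n, hN₀σ n n.2⟩)
    (cosetMap_involutive σ hKσ hσ2) (fun n y => cosetMap_smul σ hKσ n y) hq
    (hN₀.odd_index hp (isOpen_stabilizer_quotient hKo N₀ q))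

theorem exists_fixed_smul_eq_of_cosetMap_fixed (hσc : Continuous σ) (hσ2 : ∀ g, σ (σ g) = g)
    (hKσ : ∀ x ∈ K, σ x ∈ K) (hKo : IsOpen (K : Set G)) (hp : Odd p)
    (hN₀σ : ∀ x ∈ N₀, σ x ∈ N₀) (hN₀ : IsProP p N₀) {q : G ⧸ K}
    (hq : cosetMap σ hKσ q = q) {n : G} (hn : n ∈ N₀) (hnq : cosetMap σ hKσ (n • q) = n • q) :
    ∃ m ∈ N₀, σ m = m ∧ m • q = n • q := by
  let τ : N₀ →* N₀ := (σ.comp N₀.subtype).codRestrict N₀ fun x => hN₀σ x x.2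
  have hτ : Continuous τ := (hσc.comp continuous_subtype_val).subtype_mk _
  let u : N₀ := ⟨n⁻¹ * σ n, N₀.mul_mem (N₀.inv_mem hn) (hN₀σ n hn)⟩
  have hτu : τ u = u⁻¹ := Subtype.ext <| show σ (n⁻¹ * σ n) = (n⁻¹ * σ n)⁻¹ by simp [hσ2]
  have hu : u ∈ MulAction.stabilizer N₀ q := by
    have hσn : σ n • q = n • q := by rw [← hnq, cosetMap_smul, hq]
    change (n⁻¹ * σ n) • q = q
    rw [mul_smul, hσn, inv_smul_smul]
  obtain ⟨w, hw, hτw⟩ := hN₀.exists_mem_closure_zpowers_map_eq_inv_mul hp hτ hτu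
  have hw_stab : w ∈ MulAction.stabilizer N₀ q :=
    ((Subgroup.isClosed_of_isOpen _ (isOpen_stabilizer_quotient hKo N₀ q)).closure_subset_iff.mpr
      (Subgroup.zpowers_le.mpr hu)) hw
  refine ⟨n * w, N₀.mul_mem hn w.2, ?_, ?_⟩
  · have hσw : σ w = (n⁻¹ * σ n)⁻¹ * w := congrArg Subtype.val hτw
    rw [map_mul, hσw]
    group
  · rw [mul_smul]
    exact congrArg (n • ·) hw_stab

end ProPSubgroup
section DoubleCoset

variable {G : Type*} [Group G] [TopologicalSpace G] [IsTopologicalGroup G] {σ : G →* G} {p : ℕ}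
  {K : Subgroup G} {N : Subgroup G}

theorem exists_cosetMap_fixed_mem_mul_singleton_mul (hσ2 : ∀ g, σ (σ g) = g) (hp : Odd p)
    (hKo : IsOpen (K : Set G)) (hKσ : ∀ x ∈ K, σ x ∈ K)
    (hNpro : ∀ u ∈ N, ∃ N₀ : Subgroup G, u ∈ N₀ ∧ N₀ ≤ N ∧
      (∀ x ∈ N₀, σ x ∈ N₀) ∧ IsProP p ↥N₀)
    {g : G} (hg : σ g ∈ (N : Set G) * {g} * K) :
    ∃ h ∈ (N : Set G) * {g} * K, cosetMap σ hKσ h = h := by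
  obtain ⟨n, hn, hng⟩ := mem_mul_singleton_mul_iff.mp hg
  obtain ⟨N₀, hnN₀, hN₀N, hN₀σ, hN₀⟩ := hNpro n hn
  obtain ⟨_, ⟨x, rfl⟩, hx⟩ :=
    exists_cosetMap_fixed_mem_orbit hσ2 hKσ hKo hp hN₀σ hN₀ (q := g) ⟨⟨n, hnN₀⟩, hng⟩
  exact ⟨x * g, mem_mul_singleton_mul_iff.mpr ⟨x, hN₀N x.2, rfl⟩, hx⟩

theorem mem_fixed_mul_singleton_mul (hσc : Continuous σ) (hσ2 : ∀ g, σ (σ g) = g) (hp : Odd p)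
    (hKo : IsOpen (K : Set G)) (hKσ : ∀ x ∈ K, σ x ∈ K)
    (hNpro : ∀ u ∈ N, ∃ N₀ : Subgroup G, u ∈ N₀ ∧ N₀ ≤ N ∧
      (∀ x ∈ N₀, σ x ∈ N₀) ∧ IsProP p ↥N₀)
    {g h : G} (hg : cosetMap σ hKσ g = g) (hh : h ∈ (N : Set G) * {g} * K)
    (hhσ : cosetMap σ hKσ h = h) :
    h ∈ {x ∈ (N : Set G) | σ x = x} * {g} * (K : Set G) := by
  obtain ⟨n, hn, hnh⟩ := mem_mul_singleton_mul_iff.mp hh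
  obtain ⟨N₀, hnN₀, hN₀N, hN₀σ, hN₀⟩ := hNpro n hn
  obtain ⟨m, hm, hσm, hmg⟩ := exists_fixed_smul_eq_of_cosetMap_fixed hσc hσ2 hKσ hKo hp hN₀σ hN₀
    hg hnN₀ (by rw [hnh, hhσ])
  exact mem_mul_singleton_mul_iff.mpr ⟨m, ⟨hN₀N hm, hσm⟩, hmg.trans hnh⟩

theorem fixed_mul_eq_fixed_mul_fixed (hσc : Continuous σ) (hσ2 : ∀ g, σ (σ g) = g) (hp : Odd p)
    (hKo : IsOpen (K : Set G)) (hKσ : ∀ x ∈ K, σ x ∈ K)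
    (hNpro : ∀ u ∈ N, ∃ N₀ : Subgroup G, u ∈ N₀ ∧ N₀ ≤ N ∧
      (∀ x ∈ N₀, σ x ∈ N₀) ∧ IsProP p ↥N₀) :
    {x ∈ (N : Set G) * (K : Set G) | σ x = x}
      = {x ∈ (N : Set G) | σ x = x} * {x ∈ (K : Set G) | σ x = x} := by
  refine Set.Subset.antisymm (fun x ⟨hx, hσx⟩ => ?_) ?_
  · have hx1 := mem_fixed_mul_singleton_mul hσc hσ2 hp hKo hKσ hNpro (g := 1) (by simp)
      (by rwa [Set.singleton_one, mul_one]) (by simp [hσx])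
    rw [Set.singleton_one, mul_one] at hx1
    obtain ⟨n, ⟨hn, hσn⟩, k, hk, rfl⟩ := hx1
    rw [map_mul, hσn] at hσx
    exact Set.mul_mem_mul ⟨hn, hσn⟩ ⟨hk, mul_left_cancel hσx⟩
  · rintro _ ⟨n, ⟨hn, hσn⟩, k, ⟨hk, hσk⟩, rfl⟩
    exact ⟨Set.mul_mem_mul hn hk, by rw [map_mul, hσn, hσk]⟩

end DoubleCoset

theorem stmt_5_general (G : Type*) [Group G] [TopologicalSpace G] [IsTopologicalGroup G]
    (σ : G →* G) (hσc : Continuous σ) (hσ2 : ∀ g, σ (σ g) = g)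
    (p : ℕ) (hodd : Odd p)
    (K : Subgroup G) (hKo : IsOpen (K : Set G)) (hKσ : ∀ x ∈ K, σ x ∈ K)
    (N : Subgroup G)
    (hNpro : ∀ u ∈ N, ∃ N₀ : Subgroup G, u ∈ N₀ ∧ N₀ ≤ N ∧
      (∀ x ∈ N₀, σ x ∈ N₀) ∧ IsProP p ↥N₀)
    (g : G) :
    ((σ '' ((N : Set G) * {g} * (K : Set G)) = (N : Set G) * {g} * (K : Set G)) →
      ∃ h ∈ (N : Set G) * {g} * (K : Set G),
        σ '' ({h} * (K : Set G)) = {h} * (K : Set G)) ∧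
    ((σ '' ({g} * (K : Set G)) = {g} * (K : Set G)) →
      ∀ h : G, {h} * (K : Set G) ⊆ (N : Set G) * {g} * (K : Set G) →
        σ '' ({h} * (K : Set G)) = {h} * (K : Set G) →
        h ∈ {x ∈ (N : Set G) | σ x = x} * {g} * (K : Set G)) ∧
    ({x ∈ (N : Set G) * (K : Set G) | σ x = x}
      = {x ∈ (N : Set G) | σ x = x} * {x ∈ (K : Set G) | σ x = x}) := by
  have hcoset := image_singleton_mul_eq_iff σ hKσ hσ2
  refine ⟨fun hNgK => ?_, fun hgK h hsub hhK => ?_,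
    fixed_mul_eq_fixed_mul_fixed hσc hσ2 hodd hKo hKσ hNpro⟩
  · have hg : g ∈ (N : Set G) * {g} * K :=
      mem_mul_singleton_mul_iff.mpr ⟨1, N.one_mem, one_smul _ _⟩
    obtain ⟨h, hh, hfix⟩ := exists_cosetMap_fixed_mem_mul_singleton_mul hσ2 hodd hKo hKσ hNpro
      (hNgK ▸ Set.mem_image_of_mem σ hg)
    exact ⟨h, hh, (hcoset h).mpr hfix⟩
  · exact mem_fixed_mul_singleton_mul hσc hσ2 hodd hKo hKσ hNpro ((hcoset g).mp hgK)
      (hsub (Set.mem_mul.mpr ⟨h, rfl, 1, K.one_mem, mul_one h⟩))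
      ((hcoset h).mp hhK)

/-- With K a σ-stable open subgroup and N a σ-stable subgroup which is a union
of σ-stable pro-p subgroups (p odd): (i) a σ-stable double coset NgK contains a σ-stable
left K-coset; (ii) if gK is σ-stable, every σ-stable left K-coset in NgK lies in N^σ·g·K;
(iii) (NK)^σ = N^σ·K^σ. -/
theorem stmt_5 (G : Type*) [Group G] [TopologicalSpace G] [IsTopologicalGroup G]
    (σ : G →* G) (hσc : Continuous σ) (hσ2 : ∀ g, σ (σ g) = g)
    (p : ℕ) (hp : Nat.Prime p) (hodd : Odd p)
    (K : Subgroup G) (hKo : IsOpen (K : Set G)) (hKσ : ∀ x ∈ K, σ x ∈ K)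
    (N : Subgroup G) (hNcl : IsClosed (N : Set G)) (hNσ : ∀ x ∈ N, σ x ∈ N)
    (hNpro : ∀ u ∈ N, ∃ N₀ : Subgroup G, u ∈ N₀ ∧ N₀ ≤ N ∧
      (∀ x ∈ N₀, σ x ∈ N₀) ∧ IsProP p ↥N₀)
    (g : G) :
    ((σ '' ((N : Set G) * {g} * (K : Set G)) = (N : Set G) * {g} * (K : Set G)) →
      ∃ h ∈ (N : Set G) * {g} * (K : Set G),
        σ '' ({h} * (K : Set G)) = {h} * (K : Set G)) ∧
    ((σ '' ({g} * (K : Set G)) = {g} * (K : Set G)) →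
      ∀ h : G, {h} * (K : Set G) ⊆ (N : Set G) * {g} * (K : Set G) →
        σ '' ({h} * (K : Set G)) = {h} * (K : Set G) →
        h ∈ {x ∈ (N : Set G) | σ x = x} * {g} * (K : Set G)) ∧
    ({x ∈ (N : Set G) * (K : Set G) | σ x = x}
      = {x ∈ (N : Set G) | σ x = x} * {x ∈ (K : Set G) | σ x = x}) :=
  stmt_5_general G σ hσc hσ2 p hodd K hKo hKσ N hNpro g
end

section
/- Let F₀ be a non-archimedean local field with ring of integers O₀ and maximal ideal p₀. Let P^σ ⊆ GL_n(F₀) be the mirabolic subgroup (matrices with last row (0,…,0,1)) and K^σ = GL_n(O₀). Then P^σ K^σ consists precisely of those matrices g ∈ GL_n(F₀) whose last row lies in O₀^n but not in p₀^n, i.e. all entries of the last row are integral and at least one is a unit. -/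
/-! Left multiplication by a mirabolic matrix does not change the last row, so the claim is that
the last rows of matrices in `GL_n(O)` are exactly the integral rows with a unit entry. A row of
`k ∈ GL_n(O)` pairs with a column of `k⁻¹` to give `1`, and in the local ring `O` a sum equal to `1`
has a unit term. Conversely, a row `v` with `v j` a unit is the last row of the identity matrix
with its last row replaced by `v ∘ (j last)` and its columns permuted by `(j last)`; the
determinant of that matrix is `± v j`. -/

open Matrix

namespace Matrix

variable {R : Type*} [CommRing R] {ι : Type*} [Fintype ι] [DecidableEq ι]

theorem det_updateRow_one (i : ι) (w : ι → R) : ((1 : Matrix ι ι R).updateRow i w).det = w i := by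
  rw [← cramer_transpose_apply, transpose_one, cramer_one, Module.End.one_apply]

namespace GeneralLinearGroup

theorem row_mul_of_row_eq_single {p : GL ι R} {i : ι} (hp : (p : Matrix ι ι R) i = Pi.single i 1)
    (k : GL ι R) : ((p * k : GL ι R) : Matrix ι ι R) i = (k : Matrix ι ι R) i := by
  rw [coe_mul, mul_apply_eq_vecMul, hp, single_one_vecMul, row]

theorem row_mul_inv_of_row_eq {g k : GL ι R} {i : ι}
    (h : (g : Matrix ι ι R) i = (k : Matrix ι ι R) i) :
    ((g * k⁻¹ : GL ι R) : Matrix ι ι R) i = Pi.single i 1 := by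
  rw [coe_mul, mul_apply_eq_vecMul, h, ← mul_apply_eq_vecMul, ← coe_mul, mul_inv_cancel, coe_one]
  ext c
  exact one_eq_pi_single

theorem exists_row_eq_of_isUnit (i j : ι) (v : ι → R) (hv : IsUnit (v j)) :
    ∃ k : GL ι R, (k : Matrix ι ι R) i = v := by
  set σ := Equiv.swap i j
  let M := ((1 : Matrix ι ι R).updateRow i (v ∘ σ)).submatrix id σ
  have hdet : IsUnit M.det := by
    rw [det_permute', det_updateRow_one, Function.comp_apply, Equiv.swap_apply_left]
    exact ((Equiv.Perm.sign σ).isUnit.map (Int.castRingHom R)).mul hv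
  refine ⟨mk'' M hdet, funext fun c => ?_⟩
  simp [M, σ]

theorem exists_isUnit_apply [IsLocalRing R] (k : GL ι R) (i : ι) :
    ∃ j, IsUnit ((k : Matrix ι ι R) i j) := by
  by_contra! h
  have hmem : ((k * k⁻¹ : GL ι R) : Matrix ι ι R) i i ∈ IsLocalRing.maximalIdeal R := by
    rw [coe_mul, mul_apply]
    exact Ideal.sum_mem _ fun j _ => Ideal.mul_mem_right _ _ (h j)
  simp at hmem

theorem exists_map_subtype_eq {K S : Type*} [CommRing K] [SetLike S K] [SubringClass S K] (s : S)
    (k : GL ι K) (hk : ∀ i j, (k : Matrix ι ι K) i j ∈ s)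
    (hk' : ∀ i j, ((k⁻¹ : GL ι K) : Matrix ι ι K) i j ∈ s) :
    ∃ k' : GL ι s, map (SubringClass.subtype s) k' = k := by
  let A : Matrix ι ι s := of fun i j => ⟨_, hk i j⟩
  let B : Matrix ι ι s := of fun i j => ⟨_, hk' i j⟩
  have hinj : Function.Injective (RingHom.mapMatrix (m := ι) (SubringClass.subtype s)) :=
    fun _ _ h => map_injective Subtype.val_injective h
  refine ⟨⟨A, B, hinj ?_, hinj ?_⟩, Units.ext rfl⟩
  · rw [map_mul, map_one]
    exact k.mul_inv
  · rw [map_mul, map_one]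
    exact k.inv_mul

end GeneralLinearGroup

end Matrix

open Matrix.GeneralLinearGroup

theorem stmt_9_general (F : Type*) [Field F] (O : ValuationSubring F) (n : ℕ) :
    {g : GL (Fin (n + 1)) F | ∃ p k : GL (Fin (n + 1)) F,
        (∀ j, (p : Matrix (Fin (n + 1)) (Fin (n + 1)) F) (Fin.last n) j
          = if j = Fin.last n then 1 else 0) ∧
        (∀ i j, (k : Matrix (Fin (n + 1)) (Fin (n + 1)) F) i j ∈ O) ∧
        (∀ i j, ((k⁻¹ : GL (Fin (n + 1)) F) : Matrix (Fin (n + 1)) (Fin (n + 1)) F) i j ∈ O) ∧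
        g = p * k}
    = {g : GL (Fin (n + 1)) F |
        (∀ j, (g : Matrix (Fin (n + 1)) (Fin (n + 1)) F) (Fin.last n) j ∈ O) ∧
        ∃ j, ∃ y ∈ O, (g : Matrix (Fin (n + 1)) (Fin (n + 1)) F) (Fin.last n) j * y = 1} := by
  let incl : GL (Fin (n + 1)) O →* GL (Fin (n + 1)) F :=
    GeneralLinearGroup.map (SubringClass.subtype O)
  have mirabolic_iff (p : Matrix (Fin (n + 1)) (Fin (n + 1)) F) :
      (∀ j, p (Fin.last n) j = if j = Fin.last n then 1 else 0) ↔
        p (Fin.last n) = Pi.single (Fin.last n) 1 := by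
    simp [funext_iff, Pi.single_apply]
  ext g
  constructor
  · rintro ⟨p, k, hp, hk, hk', rfl⟩
    obtain ⟨k, rfl⟩ := exists_map_subtype_eq O k hk hk'
    obtain ⟨j, u, hu⟩ := exists_isUnit_apply k (Fin.last n)
    have hrow := row_mul_of_row_eq_single ((mirabolic_iff _).1 hp) (incl k)
    refine ⟨fun c => hrow ▸ (k _ c).2, j, _, (u⁻¹ : Oˣ).1.2, ?_⟩
    rw [hrow, GeneralLinearGroup.map_apply, ← hu]
    exact congrArg Subtype.val u.mul_inv
  · rintro ⟨hint, j, y, hy, hjy⟩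
    let v : Fin (n + 1) → O := fun c => ⟨_, hint c⟩
    have hv : IsUnit (v j) := IsUnit.of_mul_eq_one ⟨y, hy⟩ (Subtype.ext hjy)
    obtain ⟨k, hk⟩ := exists_row_eq_of_isUnit (Fin.last n) j v hv
    have hrow : (g : Matrix (Fin (n + 1)) (Fin (n + 1)) F) (Fin.last n) =
        ((incl k : GL (Fin (n + 1)) F) : Matrix (Fin (n + 1)) (Fin (n + 1)) F) (Fin.last n) := by
      ext c
      simp [incl, hk, v]
    refine ⟨g * (incl k)⁻¹, incl k, (mirabolic_iff _).2 (row_mul_inv_of_row_eq hrow),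
      fun i c => (k i c).2, fun i c => ?_, by group⟩
    rw [← map_inv]
    exact (k⁻¹ i c).2

/-- For a non-archimedean local field F₀ with ring of integers O, the set
P^σ·K^σ (mirabolic times GL_n(O)) consists exactly of the matrices in GL_n(F₀) whose
last row has all entries integral and at least one entry a unit of O. -/
theorem stmt_9 (F : Type*) [Field F] (O : ValuationSubring F)
    [IsDiscreteValuationRing ↥O] (n : ℕ) :
    {g : GL (Fin (n + 1)) F | ∃ p k : GL (Fin (n + 1)) F,
        (∀ j, (p : Matrix (Fin (n + 1)) (Fin (n + 1)) F) (Fin.last n) j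
          = if j = Fin.last n then 1 else 0) ∧
        (∀ i j, (k : Matrix (Fin (n + 1)) (Fin (n + 1)) F) i j ∈ O) ∧
        (∀ i j, ((k⁻¹ : GL (Fin (n + 1)) F) : Matrix (Fin (n + 1)) (Fin (n + 1)) F) i j ∈ O) ∧
        g = p * k}
    = {g : GL (Fin (n + 1)) F |
        (∀ j, (g : Matrix (Fin (n + 1)) (Fin (n + 1)) F) (Fin.last n) j ∈ O) ∧
        ∃ j, ∃ y ∈ O, (g : Matrix (Fin (n + 1)) (Fin (n + 1)) F) (Fin.last n) j * y = 1} :=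
  stmt_9_general F O n
end
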